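/- The standardization of a weak set-valued shifted tableau is a standard set-valued shifted tableau. -/

import Mathlib

/-- A shifted tableau: list of rows; row `i` is indented `i` units. -/
abbrev Tableau := List (List ℕ)

/-- Row `i` of a tableau. -/
def trow (T : Tableau) (i : ℕ) : List ℕ := T.getD i []

/-- Entry of `T` in row `i` and *absolute* column `j` (both 0-indexed). -/
def tentry? (T : Tableau) (i j : ℕ) : Option ℕ :=
  if i ≤ j then (trow T i)[j - i]? else none

/-- The (shifted) shape of a tableau: the list of row lengths. -/
def tshape (T : Tableau) : List ℕ := T.map List.length

/-- A strict partition: strictly decreasing list of positive integers. -/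
def IsStrictPartition (l : List ℕ) : Prop :=
  List.Chain' (fun a b => b < a) l ∧ ∀ x ∈ l, 0 < x

/-- Increasing shifted tableau: shape is a shifted shape of a strict partition
(row lengths strictly decrease), entries are positive and strictly increase
along rows and down columns. -/
def IsIncreasing (T : Tableau) : Prop :=
  (∀ r ∈ T, r ≠ []) ∧
  List.Chain' (fun r s => s.length < r.length) T ∧
  (∀ r ∈ T, List.Chain' (· < ·) r) ∧
  (∀ i j a b, tentry? T i j = some a → tentry? T (i + 1) j = some b → a < b) ∧
  (∀ r ∈ T, ∀ x ∈ r, 0 < x)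


/-- Result of inserting one letter: the new tableau, the box (row, absolute
column) where the insertion terminated, and whether the insertion ended with
column insertion or a failed row insertion into an empty row (primed). -/
structure InsRes where
  tab : Tableau
  box : ℕ × ℕ
  primed : Bool
deriving Repr, DecidableEq

def setEntry (T : Tableau) (i k x : ℕ) : Tableau := T.set i ((trow T i).set k x)

def appendEntry (T : Tableau) (i x : ℕ) : Tableau :=
  if i < T.length then T.set i (trow T i ++ [x]) else T ++ [[x]]

/-- The rows having a box in absolute column `c`. -/
def colRows (T : Tableau) (c : ℕ) : List ℕ :=
  (List.range T.length).filter (fun i => (tentry? T i c).isSome)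

inductive HMode where
  | row (r : ℕ)
  | col (c : ℕ)

/-- One step of shifted Hecke insertion (Patrias–Pylyavskyy): insert `x`
into row `r` (resp. column `c`), either terminating or producing an output
letter to be inserted into the next row (resp. column). -/
def insertStep (T : Tableau) : HMode → ℕ → InsRes ⊕ (Tableau × HMode × ℕ)
  | .row r, x =>
    let R := trow T r
    match R.findIdx? (fun a => decide (x < a)) with
    | none =>
      let kk := R.length
      let aboveOK : Bool := (r == 0) ||
        ((tentry? T (r - 1) (r + kk)).elim false (fun a => decide (a < x)))
      if ((R.isEmpty : Bool) || decide (R.getLastD 0 < x)) && aboveOK then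
        .inl ⟨appendEntry T r x, (r, r + kk), false⟩
      else if R.isEmpty then
        .inl ⟨T, (r - 1, (r - 1) + (trow T (r - 1)).length - 1), true⟩
      else
        .inl ⟨T, ((colRows T (r + kk - 1)).getLastD 0, r + kk - 1), false⟩
    | some k =>
      let y := R.getD k 0
      let ok : Bool := ((k == 0) || decide (R.getD (k - 1) 0 < x)) &&
        ((r == 0) || (tentry? T (r - 1) (r + k)).elim true (fun a => decide (a < x)))
      let T' := if ok then setEntry T r k x else T
      if k == 0 then .inr (T', .col (r + 1), y) else .inr (T', .row (r + 1), y)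
  | .col c, x =>
    let rows := colRows T c
    match rows.find? (fun i => decide (x < (tentry? T i c).getD 0)) with
    | none =>
      let istar := (rows.getLast?).elim 0 (· + 1)
      let k := c - istar
      let R := trow T istar
      let ok : Bool := decide (istar ≤ c) && (R.length == k) &&
        ((k == 0) || decide (R.getD (k - 1) 0 < x)) &&
        ((istar == 0) || (tentry? T (istar - 1) c).elim false (fun a => decide (a < x)))
      if ok then
        .inl ⟨appendEntry T istar x, (istar, c), true⟩
      else
        let ib := rows.getLastD 0
        .inl ⟨T, (ib, ib + (trow T ib).length - 1), true⟩
    | some i =>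
      let k := c - i
      let y := (trow T i).getD k 0
      let ok : Bool := ((k == 0) || decide ((trow T i).getD (k - 1) 0 < x)) &&
        ((i == 0) || (tentry? T (i - 1) c).elim true (fun a => decide (a < x)))
      let T' := if ok then setEntry T i k x else T
      .inr (T', .col (c + 1), y)

def insertAux : ℕ → Tableau → HMode → ℕ → InsRes
  | 0, T, _, _ => ⟨T, (0, 0), false⟩
  | fuel + 1, T, m, x =>
    match insertStep T m x with
    | .inl res => res
    | .inr (T', m', x') => insertAux fuel T' m' x'

/-- Shifted Hecke insertion of a single letter `x` into `T`. -/
def insert1 (T : Tableau) (x : ℕ) : InsRes :=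
  insertAux (T.length + (trow T 0).length + x + 10) T (.row 0) x

/-- Set-valued shifted tableaux (and weak set-valued shifted tableaux) are
fillings of a shifted shape by multisets of entries `(v, p)`, where `p = true`
means the entry is the primed letter `v'`. -/
abbrev SVTRep := List (List (Multiset (ℕ × Bool)))

def tabRecStep (TQ : Tableau × SVTRep) (ix : ℕ × ℕ) : Tableau × SVTRep :=
  let res := insert1 TQ.1 ix.2
  let l : ℕ × Bool := (ix.1 + 1, res.primed)
  let r := res.box.1
  let k := res.box.2 - res.box.1
  let Q := TQ.2
  let Q' :=
    if tshape res.tab ≠ tshape TQ.1 then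
      if r < Q.length then Q.set r ((Q.getD r []) ++ [{l}]) else Q ++ [[{l}]]
    else
      Q.set r ((Q.getD r []).set k (l ::ₘ (Q.getD r []).getD k 0))
  (res.tab, Q')

def tabRec (w : List ℕ) : Tableau × SVTRep := (w.zipIdx.map Prod.swap).foldl tabRecStep ([], [])

/-- The shifted Hecke insertion tableau of a word. -/
def Tab (w : List ℕ) : Tableau := (tabRec w).1

/-- The shifted Hecke insertion recording tableau of a word. -/
def Rec (w : List ℕ) : SVTRep := (tabRec w).2

/-- Key giving the total order `1' < 1 < 2' < 2 < ⋯` ((v, true) means `v'`). -/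
def keyOf (e : ℕ × Bool) : ℕ := 2 * e.1 - (if e.2 then 1 else 0)

def boxAt (T : SVTRep) (i k : ℕ) : Multiset (ℕ × Bool) := (T.getD i []).getD k 0

def sshape (T : SVTRep) : List ℕ := T.map List.length

/-- The multiset of all entries of a (weak) set-valued shifted tableau. -/
def totalMS (T : SVTRep) : Multiset (ℕ × Bool) := (T.map (fun r => r.sum)).sum

/-- Weak set-valued shifted tableau: boxes of a shifted shape filled with
finite nonempty multisets of primed/unprimed positive integers, rows and
columns weakly increasing between boxes, no primed entries on the main
diagonal, each unprimed letter in at most one box per column, each primed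
letter in at most one box per row. -/
def IsWSVT (T : SVTRep) : Prop :=
  (∀ r ∈ T, r ≠ []) ∧
  List.Chain' (fun r s => s.length < r.length) T ∧
  (∀ r ∈ T, ∀ b ∈ r, b ≠ 0) ∧
  (∀ e ∈ totalMS T, 0 < e.1) ∧
  (∀ i k, ∀ x ∈ boxAt T i k, ∀ y ∈ boxAt T i (k + 1), keyOf x ≤ keyOf y) ∧
  (∀ i k, ∀ x ∈ boxAt T i (k + 1), ∀ y ∈ boxAt T (i + 1) k, keyOf x ≤ keyOf y) ∧
  (∀ i, ∀ e ∈ boxAt T i 0, e.2 = false) ∧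
  (∀ v c : ℕ, {i | i ≤ c ∧ (v, false) ∈ boxAt T i (c - i)}.Subsingleton) ∧
  (∀ v i : ℕ, {k | (v, true) ∈ boxAt T i k}.Subsingleton)

/-- Set-valued shifted tableau: boxes contain (nonempty) *sets*. -/
def IsSVT (T : SVTRep) : Prop := IsWSVT T ∧ ∀ r ∈ T, ∀ b ∈ r, b.Nodup

/-- Standard set-valued shifted tableau on `n` letters: each of `1, …, n`
appears exactly once, either primed or unprimed. -/
def IsStdSVT (n : ℕ) (T : SVTRep) : Prop :=
  IsSVT T ∧ Multiset.map Prod.fst (totalMS T) = (Finset.Icc 1 n).val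

/-- Position (row, index-in-row) of the box containing a given entry. -/
def posOf (Q : SVTRep) (e : ℕ × Bool) : Option (ℕ × ℕ) :=
  (List.range Q.length).findSome? (fun i =>
    ((Q.getD i []).findIdx? (fun b => decide (e ∈ b))).map (fun k => (i, k)))

/-- Descent set of a standard set-valued shifted tableau. -/
def Ddesc (Q : SVTRep) : Set ℕ :=
  {i | 1 ≤ i ∧ (
    ((posOf Q (i, false)).isSome ∧ (posOf Q (i + 1, true)).isSome) ∨
    (∃ p q, posOf Q (i, false) = some p ∧ posOf Q (i + 1, false) = some q ∧ p.1 < q.1) ∨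
    (∃ p q, posOf Q (i, true) = some p ∧ posOf Q (i + 1, true) = some q ∧
      q.1 ≤ p.1 ∧ p ≠ q))}

/-- Descent set of a word (1-indexed): `{i : wᵢ > wᵢ₊₁}`. -/
def Dword (w : List ℕ) : Set ℕ :=
  {i | 1 ≤ i ∧ i + 1 ≤ w.length ∧ w.getD i 0 < w.getD (i - 1) 0}

/-- Boxes (with multiplicity) containing the primed letter `v'`, top to bottom. -/
def occP (T : SVTRep) (v : ℕ) : List ((ℕ × ℕ) × ℕ) :=
  (List.range T.length).flatMap (fun i =>
    (List.range (T.getD i []).length).filterMap (fun k =>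
      let m := (boxAt T i k).count (v, true)
      if m = 0 then none else some ((i, k), m)))

/-- Boxes (with multiplicity) containing the unprimed letter `v`, left to right. -/
def occU (T : SVTRep) (v : ℕ) : List ((ℕ × ℕ) × ℕ) :=
  ((List.range T.length).flatMap (fun i =>
    (List.range (T.getD i []).length).filterMap (fun k =>
      let m := (boxAt T i k).count (v, false)
      if m = 0 then none else some ((i, k), m)))).mergeSort
    (fun p q => p.1.1 + p.1.2 ≤ q.1.1 + q.1.2)

/-- All occurrences of entries of `T` in the order `1' < 1 < 2' < 2 < ⋯`,
occurrences of `v` read left to right and of `v'` top to bottom. -/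
def allOcc (T : SVTRep) : List ((ℕ × ℕ) × ℕ × Bool) :=
  (List.range (((totalMS T).map Prod.fst).sum)).flatMap (fun v0 =>
    (occP T (v0 + 1)).map (fun o => (o.1, o.2, true)) ++
    (occU T (v0 + 1)).map (fun o => (o.1, o.2, false)))

def addLabels (S : SVTRep) (p : ℕ × ℕ) (start m : ℕ) (pr : Bool) : SVTRep :=
  S.set p.1 ((S.getD p.1 []).set p.2
    ((((List.range m).map (fun t => (start + t + 1, pr)) : List (ℕ × Bool)) : Multiset _) +
      (S.getD p.1 []).getD p.2 0))

/-- Standardization of a weak set-valued shifted tableau. -/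
def stdize (T : SVTRep) : SVTRep :=
  ((allOcc T).foldl
    (fun Sn o => (addLabels Sn.1 o.1 Sn.2 o.2.1 o.2.2, Sn.2 + o.2.1))
    (T.map (fun r => r.map (fun _ => (0 : Multiset (ℕ × Bool)))), 0)).1
/-! ### Weak K-Knuth equivalence -/

/-- A single weak K-Knuth relation (Buch–Samuel), for positive letters
`a < b < c`. -/
inductive KStep : List ℕ → List ℕ → Prop
  | dup (u v : List ℕ) (a : ℕ) (ha : 0 < a) :
      KStep (u ++ [a, a] ++ v) (u ++ [a] ++ v)
  | aba (u v : List ℕ) (a b : ℕ) (ha : 0 < a) (hab : a < b) :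
      KStep (u ++ [a, b, a] ++ v) (u ++ [b, a, b] ++ v)
  | bac (u v : List ℕ) (a b c : ℕ) (ha : 0 < a) (hab : a < b) (hbc : b < c) :
      KStep (u ++ [b, a, c] ++ v) (u ++ [b, c, a] ++ v)
  | acb (u v : List ℕ) (a b c : ℕ) (ha : 0 < a) (hab : a < b) (hbc : b < c) :
      KStep (u ++ [a, c, b] ++ v) (u ++ [c, a, b] ++ v)
  | front (u : List ℕ) (a b : ℕ) (ha : 0 < a) (hab : a < b) :
      KStep ([a, b] ++ u) ([b, a] ++ u)

/-- Weak K-Knuth equivalence: symmetric transitive (and reflexive) closure of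
the weak K-Knuth relations. -/
def WeakKKnuth : List ℕ → List ℕ → Prop := Relation.EqvGen KStep

/-- Restriction of a word to the letters lying in the interval `[lo, hi]`. -/
def restrictWord (lo hi : ℕ) (w : List ℕ) : List ℕ :=
  w.filter (fun x => decide (lo ≤ x ∧ x ≤ hi))

/-- A word of positive integers. -/
def PosWord (w : List ℕ) : Prop := ∀ x ∈ w, 0 < x

/-- The reading word of a tableau: rows left to right, bottom to top. -/
def rowword (T : Tableau) : List ℕ := T.reverse.flatten

/-- Unique rectification target: the only increasing shifted tableau in its
weak K-Knuth equivalence class. -/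
def IsURT (T : Tableau) : Prop :=
  IsIncreasing T ∧
  ∀ T' : Tableau, IsIncreasing T' → WeakKKnuth (rowword T') (rowword T) → T' = T

/-- The minimal increasing shifted tableau of shape `λ`. -/
def Mtab (lam : List ℕ) : Tableau :=
  (List.range lam.length).map (fun i =>
    (List.range (lam.getD i 0)).map (fun p => 2 * i + p + 1))

/-! ### Symmetric-function layer -/

/-- Number of entries of `T` equal to `v` or `v'`. -/
def wtOf (T : SVTRep) (v : ℕ) : ℕ := ((totalMS T).filter (fun e => e.1 = v)).card

/-- The weak shifted stable Grothendieck polynomial `K_λ`: the generating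
function of weak set-valued shifted tableaux of shape `λ`. -/
noncomputable def Kser (lam : List ℕ) : MvPowerSeries ℕ ℚ :=
  fun μ => (Set.ncard {T : SVTRep | IsWSVT T ∧ sshape T = lam ∧ ∀ v, μ v = wtOf T v} : ℚ)

/-- The shifted stable Grothendieck polynomial `GP_λ` of Ikeda–Naruse:
`GP_λ = Σ_T (-1)^{|T| - |λ|} x^T` over set-valued shifted tableaux of shape `λ`. -/
noncomputable def GPser (lam : List ℕ) : MvPowerSeries ℕ ℚ :=
  fun μ => ((-1 : ℚ)) ^ (μ.sum (fun _ e => e) - lam.sum) *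
    (Set.ncard {T : SVTRep | IsSVT T ∧ sshape T = lam ∧ ∀ v, μ v = wtOf T v} : ℚ)

/-- Substitution `xᵢ ↦ -xᵢ/(1 - xᵢ)` in a multivariate power series, computed
coefficientwise: `[x^b] f(-x/(1-x)) = Σ_{a ≤ b} ([x^a] f) ∏ᵢ (-1)^{aᵢ} C(bᵢ-1, aᵢ-1)`,
using that `(-x/(1-x))^a = Σ_{b ≥ a} (-1)^a C(b-1, a-1) x^b`. -/
noncomputable def substFrac (f : MvPowerSeries ℕ ℚ) : MvPowerSeries ℕ ℚ :=
  fun b => ∑ a ∈ Finset.Iic b, (MvPowerSeries.coeff a f) *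
    ∏ i ∈ b.support,
      (if a i = 0 then 0 else
        ((-1 : ℚ)) ^ (a i) * (Nat.choose (b i - 1) (a i - 1) : ℚ))

/-- A power series in variables `x₀, x₁, …` is symmetric if it is invariant
under every permutation of the variables. -/
def IsSymmPS (f : MvPowerSeries ℕ ℚ) : Prop :=
  ∀ (σ : Equiv.Perm ℕ) (μ : ℕ →₀ ℕ),
    MvPowerSeries.coeff (Finsupp.equivMapDomain σ μ) f = MvPowerSeries.coeff μ f

/-- The fundamental quasisymmetric function `f_D` for words of length `m`
(descent positions `D`, 1-indexed): `Σ x_{i₁} ⋯ x_{iₘ}` over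
`i₁ ≤ ⋯ ≤ iₘ` with `i_j < i_{j+1}` whenever `j ∈ D`. -/
noncomputable def fQ (m : ℕ) (D : Set ℕ) : MvPowerSeries ℕ ℚ :=
  fun μ => (Set.ncard {s : ℕ → ℕ |
    (∀ i, 1 ≤ i → i ≤ m → 1 ≤ s i) ∧
    (∀ i, i = 0 ∨ m < i → s i = 0) ∧
    (∀ i, 1 ≤ i → i + 1 ≤ m → s i ≤ s (i + 1)) ∧
    (∀ i ∈ D, 1 ≤ i → i + 1 ≤ m → s i < s (i + 1)) ∧
    (∀ v, μ v = Set.ncard {i | 1 ≤ i ∧ i ≤ m ∧ s i = v})} : ℚ)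

/-- `IsShuffle u v w` : `w` is a shuffle (interleaving) of `u` and `v`. -/
inductive IsShuffle : List ℕ → List ℕ → List ℕ → Prop
  | nil : IsShuffle [] [] []
  | left {u v w : List ℕ} (a : ℕ) : IsShuffle u v w → IsShuffle (a :: u) v (a :: w)
  | right {u v w : List ℕ} (a : ℕ) : IsShuffle u v w → IsShuffle u (a :: v) (a :: w)

/-! ### Skew shifted tableaux -/

/-- Entry of a skew filling `R` of shape `ν/λ` in row `i`, absolute column `j`. -/
def skentry? (lam : List ℕ) (R : List (List ℕ)) (i j : ℕ) : Option ℕ :=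
  if i + lam.getD i 0 ≤ j then (R.getD i [])[j - i - lam.getD i 0]? else none

/-- Increasing shifted skew tableau of shape `ν/λ`. -/
def IsIncSkew (lam nu : List ℕ) (R : List (List ℕ)) : Prop :=
  lam.length ≤ nu.length ∧ (∀ i, lam.getD i 0 ≤ nu.getD i 0) ∧
  R.length = nu.length ∧
  (∀ i, (R.getD i []).length = nu.getD i 0 - lam.getD i 0) ∧
  (∀ r ∈ R, List.Chain' (· < ·) r) ∧
  (∀ r ∈ R, ∀ x ∈ r, 0 < x) ∧
  (∀ i j a b, skentry? lam R i j = some a → skentry? lam R (i + 1) j = some b → a < b)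

/-! ### Unshifted Hecke insertion and stable Grothendieck polynomials -/

/-- Hecke insertion (Buch–Kresch–Shimozono–Tamvakis–Yong) of a letter into the
rows of an (unshifted) increasing tableau; `prev` is the previous row. -/
def hIns : Option (List ℕ) → List (List ℕ) → ℕ → List (List ℕ)
  | prev, [], x =>
      match prev with
      | none => [[x]]
      | some P => if P.getD 0 0 < x then [[x]] else []
  | prev, R :: rest, x =>
    match R.findIdx? (fun a => decide (x < a)) with
    | none =>
      let ok : Bool := ((R.isEmpty : Bool) || decide (R.getLastD 0 < x)) &&
        (prev.elim true (fun P => decide (R.length < P.length) && decide (P.getD R.length 0 < x)))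
      if ok then (R ++ [x]) :: rest else R :: rest
    | some k =>
      let y := R.getD k 0
      let ok : Bool := ((k == 0) || decide (R.getD (k - 1) 0 < x)) &&
        (prev.elim true (fun P => decide (P.getD k 0 < x)))
      let R' := if ok then R.set k x else R
      R' :: hIns (some R') rest y

/-- The (unshifted) Hecke insertion tableau `P_K(w)` of a word. -/
def PK (w : List ℕ) : List (List ℕ) := w.foldl (fun T x => hIns none T x) []

/-- Unshifted set-valued tableaux: boxes filled by finite nonempty sets. -/
abbrev USVRep := List (List (Multiset ℕ))

def uboxAt (T : USVRep) (i k : ℕ) : Multiset ℕ := (T.getD i []).getD k 0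

/-- Set-valued tableau of (unshifted) partition shape: rows weakly increase,
columns weakly increase between boxes, and each integer appears in at most one
box of each column. -/
def IsUSV (T : USVRep) : Prop :=
  (∀ r ∈ T, r ≠ []) ∧
  List.Chain' (fun r s => s.length ≤ r.length) T ∧
  (∀ r ∈ T, ∀ b ∈ r, b ≠ 0 ∧ b.Nodup) ∧
  (∀ r ∈ T, ∀ b ∈ r, ∀ x ∈ b, 0 < x) ∧
  (∀ i k, ∀ x ∈ uboxAt T i k, ∀ y ∈ uboxAt T i (k + 1), x ≤ y) ∧
  (∀ i k, ∀ x ∈ uboxAt T i k, ∀ y ∈ uboxAt T (i + 1) k, x ≤ y) ∧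
  (∀ v k : ℕ, {i | v ∈ uboxAt T i k}.Subsingleton)

def uwt (T : USVRep) (v : ℕ) : ℕ :=
  (((T.map (fun r => r.sum)).sum : Multiset ℕ).filter (fun x => x = v)).card

/-- The (signless) stable Grothendieck polynomial `G_μ`: generating function
of set-valued tableaux of shape `μ`. -/
noncomputable def Gser (mu : List ℕ) : MvPowerSeries ℕ ℚ :=
  fun μ => (Set.ncard {T : USVRep | IsUSV T ∧ T.map List.length = mu ∧ ∀ v, μ v = uwt T v} : ℚ)

/-!
Standardization reads the occurrences of letters in the order `1' < 1 < 2' < 2 < ⋯`, the copies of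
a primed letter from top to bottom and those of an unprimed letter from left to right, and hands out
the labels `1, 2, …` consecutively along this reading. Distinct occurrences get distinct labels, so
the boxes become sets, every label sits in a single box, and the labels are exactly `1, …, n`.

Weak increase comes from the reading order: if `q` is the right or lower neighbour of `p`, every
occurrence in `p` is read before every occurrence in `q`. Letters are read block by block, and only
the block of the largest entry of `p` can meet both boxes. Inside that block `p` is read first: for
an unprimed entry because `p` lies further left (or, for `q` below `p`, because an unprimed letter
occurs at most once per column), for a primed entry because `p` lies higher (or, for `q` right of
`p`, because a primed letter occurs at most once per row).
-/

namespace Standardization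

section Lists

lemma getD_mem {α : Type*} {l : List α} {i : ℕ} (d : α) (hi : i < l.length) : l.getD i d ∈ l := by
  rw [List.getD_eq_getElem _ _ hi]
  exact List.getElem_mem hi

lemma map_getD_range {α β : Type*} (l : List α) (d : α) (f : α → β) :
    (List.range l.length).map (fun k => f (l.getD k d)) = l.map f :=
  List.ext_getElem (by simp) fun n h₁ _ => by
    simp [List.getElem?_eq_getElem (by simpa using h₁ : n < l.length)]

lemma sum_map_snd_filterMap {α : Type*} (l : List ℕ) (f : ℕ → α) (g : ℕ → ℕ) :
    ((l.filterMap fun k => if g k = 0 then none else some (f k, g k)).map Prod.snd).sum =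
      (l.map g).sum := by
  induction l with
  | nil => rfl
  | cons a l ih => by_cases h : g a = 0 <;> simp [h, ih]

lemma sum_flatMap {α M : Type*} [AddMonoid M] (l : List α) (f : α → List M) :
    (l.flatMap f).sum = (l.map fun a => (f a).sum).sum := by
  induction l <;> simp [*]

lemma count_list_sum {α : Type*} [DecidableEq α] (a : α) (l : List (Multiset α)) :
    l.sum.count a = (l.map (Multiset.count a)).sum := by
  simpa using map_list_sum (Multiset.countAddMonoidHom a) l

lemma sum_set_add_getD {M : Type*} [AddCommMonoid M] {l : List M} {n : ℕ} (hn : n < l.length)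
    (x : M) : (l.set n (x + l.getD n 0)).sum = x + l.sum := by
  rw [List.sum_set, List.getD_eq_getElem _ _ hn, if_pos hn, ← List.sum_take_add_sum_drop l n,
    List.drop_eq_getElem_cons hn, List.sum_cons]
  abel

lemma map_add_one_range (N : ℕ) : (Multiset.range N).map (· + 1) = (Finset.Icc 1 N).val := by
  refine (Multiset.Nodup.ext ((Multiset.nodup_range N).map (add_left_injective 1))
    (Finset.Icc 1 N).nodup).2 fun a => ?_
  simp only [Multiset.mem_map, Multiset.mem_range, Finset.mem_val, Finset.mem_Icc]
  exact ⟨by rintro ⟨t, ht, rfl⟩; omega, fun h => ⟨a - 1, by omega, by omega⟩⟩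

end Lists

section Labelling

variable {P : Type*}

/- An occurrence `(p, m, pr)` stands for `m` copies of one letter, primed iff `pr`, in box `p`;
reading a list of occurrences in order, the `m` copies receive the next `m` standard labels. -/
def labelRun (n m : ℕ) (pr : Bool) : Multiset (ℕ × Bool) :=
  ((List.range m).map fun t => (n + t + 1, pr) : List (ℕ × Bool))

def totalMult (L : List (P × ℕ × Bool)) : ℕ := (L.map fun o => o.2.1).sum

def allLabels : List (P × ℕ × Bool) → ℕ → Multiset (ℕ × Bool)
  | [], _ => 0
  | o :: L, n => labelRun n o.2.1 o.2.2 + allLabels L (n + o.2.1)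

@[simp]
lemma totalMult_nil : totalMult ([] : List (P × ℕ × Bool)) = 0 := rfl

@[simp]
lemma totalMult_cons (o : P × ℕ × Bool) (L : List (P × ℕ × Bool)) :
    totalMult (o :: L) = o.2.1 + totalMult L := List.sum_cons

lemma totalMult_append (L₁ L₂ : List (P × ℕ × Bool)) :
    totalMult (L₁ ++ L₂) = totalMult L₁ + totalMult L₂ := by
  simp [totalMult]

lemma totalMult_flatMap {α : Type*} (l : List α) (g : α → List (P × ℕ × Bool)) :
    totalMult (l.flatMap g) = (l.map fun a => totalMult (g a)).sum := by
  induction l <;> simp [totalMult_append, *]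

lemma mem_labelRun {n m : ℕ} {pr : Bool} {e : ℕ × Bool} :
    e ∈ labelRun n m pr ↔ n < e.1 ∧ e.1 ≤ n + m ∧ e.2 = pr := by
  simp only [labelRun, Multiset.mem_coe, List.mem_map, List.mem_range]
  constructor
  · rintro ⟨t, ht, rfl⟩
    exact ⟨by omega, by omega, rfl⟩
  · rintro ⟨h₁, h₂, h₃⟩
    exact ⟨e.1 - n - 1, by omega, Prod.ext (by simp; omega) h₃.symm⟩

lemma nodup_labelRun (n m : ℕ) (pr : Bool) : (labelRun n m pr).Nodup :=
  Multiset.coe_nodup.2 <| List.nodup_range.map fun a b h => by simpa using h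

lemma labelRun_ne_zero {n m : ℕ} (pr : Bool) (hm : m ≠ 0) : labelRun n m pr ≠ 0 :=
  fun h => hm (by simpa [labelRun] using congrArg Multiset.card h)

lemma map_fst_labelRun (n m : ℕ) (pr : Bool) :
    (labelRun n m pr).map Prod.fst = (Multiset.range m).map (n + · + 1) := by
  simp [labelRun, Multiset.range, Function.comp_def]

lemma map_fst_allLabels (L : List (P × ℕ × Bool)) (n : ℕ) :
    (allLabels L n).map Prod.fst = (Multiset.range (totalMult L)).map (n + · + 1) := by
  induction L generalizing n with
  | nil => simp [allLabels]
  | cons o L ih =>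
    rw [allLabels, Multiset.map_add, ih, map_fst_labelRun, totalMult_cons, Multiset.range_add,
      Multiset.map_add, Multiset.map_map]
    congr 2
    funext t
    simp only [Function.comp_apply]
    omega

def Precedes (p q : P) (L : List (P × ℕ × Bool)) : Prop :=
  ∃ L₁ L₂, L = L₁ ++ L₂ ∧ (∀ o ∈ L₁, o.1 ≠ q) ∧ (∀ o ∈ L₂, o.1 ≠ p)

lemma precedes_of_forall_ne {p q : P} {L : List (P × ℕ × Bool)} (h : ∀ o ∈ L, o.1 ≠ q) :
    Precedes p q L :=
  ⟨L, [], (List.append_nil L).symm, h, by simp⟩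

lemma Precedes.append_left {p q : P} {A B : List (P × ℕ × Bool)} (hA : ∀ o ∈ A, o.1 ≠ q)
    (hB : Precedes p q B) : Precedes p q (A ++ B) := by
  obtain ⟨L₁, L₂, rfl, h₁, h₂⟩ := hB
  refine ⟨A ++ L₁, L₂, (List.append_assoc ..).symm, ?_, h₂⟩
  exact List.forall_mem_append.2 ⟨hA, h₁⟩

lemma Precedes.append_right {p q : P} {A B : List (P × ℕ × Bool)} (hA : Precedes p q A)
    (hB : ∀ o ∈ B, o.1 ≠ p) : Precedes p q (A ++ B) := by
  obtain ⟨L₁, L₂, rfl, h₁, h₂⟩ := hA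
  refine ⟨L₁, L₂ ++ B, List.append_assoc .., h₁, ?_⟩
  exact List.forall_mem_append.2 ⟨h₂, hB⟩

lemma precedes_of_pairwise {R : P × ℕ × Bool → P × ℕ × Bool → Prop} {p q : P} (hpq : p ≠ q)
    {L : List (P × ℕ × Bool)} (hL : L.Pairwise R)
    (h : ∀ o₁ o₂, o₁.1 = q → o₂.1 = p → ¬ R o₁ o₂) : Precedes p q L := by
  induction L with
  | nil => exact precedes_of_forall_ne (by simp)
  | cons a L ih =>
    rw [List.pairwise_cons] at hL
    by_cases ha : a.1 = q
    · refine ⟨[], a :: L, rfl, by simp, ?_⟩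
      simp only [List.mem_cons, forall_eq_or_imp]
      exact ⟨ha ▸ hpq.symm, fun o ho hop => h a o ha hop (hL.1 o ho)⟩
    · exact (ih hL.2).append_left (A := [a]) (by simpa using ha)

lemma precedes_flatMap_range {p q : P} (g : ℕ → List (P × ℕ × Bool)) (M t : ℕ)
    (hbefore : ∀ j < t, ∀ o ∈ g j, o.1 ≠ q) (hafter : ∀ j, t < j → ∀ o ∈ g j, o.1 ≠ p)
    (ht : Precedes p q (g t)) : Precedes p q ((List.range M).flatMap g) := by
  induction M with
  | zero => exact precedes_of_forall_ne (by simp)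
  | succ M ih =>
    rw [List.range_succ, List.flatMap_append, List.flatMap_singleton]
    rcases lt_trichotomy M t with h | rfl | h
    · refine precedes_of_forall_ne ?_
      simp only [List.mem_append, List.mem_flatMap, List.mem_range]
      rintro o (⟨j, hj, ho⟩ | ho)
      exacts [hbefore j (by omega) o ho, hbefore M h o ho]
    · refine Precedes.append_left ?_ ht
      simp only [List.mem_flatMap, List.mem_range]
      rintro o ⟨j, hj, ho⟩
      exact hbefore j hj o ho
    · exact ih.append_right (hafter M h)

variable [DecidableEq P]

def labelsAt : List (P × ℕ × Bool) → ℕ → P → Multiset (ℕ × Bool)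
  | [], _, _ => 0
  | o :: L, n, p => (if o.1 = p then labelRun n o.2.1 o.2.2 else 0) + labelsAt L (n + o.2.1) p

lemma mem_labelsAt_cons {o : P × ℕ × Bool} {L : List (P × ℕ × Bool)} {n : ℕ} {p : P}
    {e : ℕ × Bool} : e ∈ labelsAt (o :: L) n p ↔
      (o.1 = p ∧ e ∈ labelRun n o.2.1 o.2.2) ∨ e ∈ labelsAt L (n + o.2.1) p := by
  rw [labelsAt, Multiset.mem_add]
  split_ifs with h <;> simp [h]

lemma bounds_of_mem_labelsAt {L : List (P × ℕ × Bool)} {n : ℕ} {p : P} {e : ℕ × Bool}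
    (h : e ∈ labelsAt L n p) : n < e.1 ∧ e.1 ≤ n + totalMult L := by
  induction L generalizing n with
  | nil => simp [labelsAt] at h
  | cons o L ih =>
    rw [totalMult_cons]
    rcases mem_labelsAt_cons.1 h with ⟨-, h⟩ | h
    · have := mem_labelRun.1 h
      omega
    · have := ih h
      omega

lemma exists_of_mem_labelsAt {L : List (P × ℕ × Bool)} {n : ℕ} {p : P} {e : ℕ × Bool}
    (h : e ∈ labelsAt L n p) : ∃ o ∈ L, o.1 = p ∧ o.2.2 = e.2 := by
  induction L generalizing n with
  | nil => simp [labelsAt] at h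
  | cons o L ih =>
    rcases mem_labelsAt_cons.1 h with ⟨hop, h⟩ | h
    · exact ⟨o, List.mem_cons_self, hop, (mem_labelRun.1 h).2.2.symm⟩
    · obtain ⟨o', ho', h'⟩ := ih h
      exact ⟨o', List.mem_cons_of_mem _ ho', h'⟩

lemma labelsAt_append (L₁ L₂ : List (P × ℕ × Bool)) (n : ℕ) (p : P) :
    labelsAt (L₁ ++ L₂) n p = labelsAt L₁ n p + labelsAt L₂ (n + totalMult L₁) p := by
  induction L₁ generalizing n with
  | nil => simp [labelsAt]
  | cons o L₁ ih => simp [labelsAt, ih, add_assoc]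

lemma labelsAt_eq_zero {L : List (P × ℕ × Bool)} {p : P} (h : ∀ o ∈ L, o.1 ≠ p) (n : ℕ) :
    labelsAt L n p = 0 := by
  induction L generalizing n with
  | nil => rfl
  | cons o L ih =>
    simp [labelsAt, h o List.mem_cons_self, ih fun o' ho' => h o' (List.mem_cons_of_mem _ ho')]

lemma labelsAt_ne_zero {L : List (P × ℕ × Bool)} {o : P × ℕ × Bool} (ho : o ∈ L) (hm : o.2.1 ≠ 0)
    (n : ℕ) : labelsAt L n o.1 ≠ 0 := by
  induction L generalizing n with
  | nil => simp at ho
  | cons a L ih =>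
    rw [labelsAt]
    rcases List.mem_cons.1 ho with rfl | ho
    · rw [if_pos rfl]
      exact fun h => labelRun_ne_zero o.2.2 hm (add_eq_zero.1 h).1
    · exact fun h => ih ho _ (add_eq_zero.1 h).2

lemma nodup_labelsAt (L : List (P × ℕ × Bool)) (n : ℕ) (p : P) : (labelsAt L n p).Nodup := by
  induction L generalizing n with
  | nil => simp [labelsAt]
  | cons o L ih =>
    rw [labelsAt, Multiset.Nodup.add_iff (by split_ifs <;> simp [nodup_labelRun]) (ih _)]
    refine Multiset.disjoint_left.2 fun he he' => ?_
    have := (bounds_of_mem_labelsAt he').1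
    split_ifs at he
    · have := (mem_labelRun.1 he).2.1
      omega
    · simp at he

lemma eq_of_mem_labelsAt {L : List (P × ℕ × Bool)} {n : ℕ} {p q : P} {e : ℕ × Bool}
    (hp : e ∈ labelsAt L n p) (hq : e ∈ labelsAt L n q) : p = q := by
  induction L generalizing n with
  | nil => simp [labelsAt] at hp
  | cons o L ih =>
    rw [mem_labelsAt_cons] at hp hq
    rcases hp with ⟨rfl, hp⟩ | hp <;> rcases hq with ⟨hq', hq⟩ | hq
    · exact hq'
    · have := (mem_labelRun.1 hp).2.1
      have := (bounds_of_mem_labelsAt hq).1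
      omega
    · have := (mem_labelRun.1 hq).2.1
      have := (bounds_of_mem_labelsAt hp).1
      omega
    · exact ih hp hq

lemma Precedes.lt_of_mem_labelsAt {p q : P} {L : List (P × ℕ × Bool)} {n : ℕ} {x y : ℕ × Bool}
    (h : Precedes p q L) (hx : x ∈ labelsAt L n p) (hy : y ∈ labelsAt L n q) : x.1 < y.1 := by
  obtain ⟨L₁, L₂, rfl, h₁, h₂⟩ := h
  rw [labelsAt_append, labelsAt_eq_zero h₂, add_zero] at hx
  rw [labelsAt_append, labelsAt_eq_zero h₁, zero_add] at hy
  have := (bounds_of_mem_labelsAt hx).2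
  have := (bounds_of_mem_labelsAt hy).1
  omega

end Labelling

section Occurrences

def IsBox (S : SVTRep) (p : ℕ × ℕ) : Prop := p.2 < (sshape S).getD p.1 0

lemma getD_sshape (S : SVTRep) (i : ℕ) : (sshape S).getD i 0 = (S.getD i []).length := by
  simp only [sshape, List.getD_eq_getElem?_getD, List.getElem?_map]
  cases S[i]? <;> rfl

lemma isBox_iff {S : SVTRep} {p : ℕ × ℕ} :
    IsBox S p ↔ p.1 < S.length ∧ p.2 < (S.getD p.1 []).length := by
  rw [IsBox, getD_sshape]
  refine ⟨fun h => ⟨?_, h⟩, And.right⟩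
  by_contra hp
  rw [List.getD_eq_default _ _ (not_lt.1 hp)] at h
  simp at h

lemma isBox_of_sshape_eq {S S' : SVTRep} (h : sshape S = sshape S') {p : ℕ × ℕ} (hp : IsBox S' p) :
    IsBox S p := by
  rwa [IsBox, h]

lemma exists_isBox_of_mem {S : SVTRep} {r : List (Multiset (ℕ × Bool))} {b : Multiset (ℕ × Bool)}
    (hr : r ∈ S) (hb : b ∈ r) : ∃ p, IsBox S p ∧ boxAt S p.1 p.2 = b := by
  obtain ⟨i, hi, rfl⟩ := List.getElem_of_mem hr
  obtain ⟨k, hk, rfl⟩ := List.getElem_of_mem hb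
  have hrow : S.getD i [] = S[i] := List.getD_eq_getElem _ _ hi
  exact ⟨(i, k), isBox_iff.2 ⟨hi, hrow ▸ hk⟩, by rw [boxAt, hrow, List.getD_eq_getElem _ _ hk]⟩

lemma boxAt_le_totalMS {T : SVTRep} {p : ℕ × ℕ} (hp : IsBox T p) : boxAt T p.1 p.2 ≤ totalMS T := by
  obtain ⟨hi, hk⟩ := isBox_iff.1 hp
  calc boxAt T p.1 p.2 ≤ (T.getD p.1 []).sum := List.le_sum_of_mem (getD_mem 0 hk)
    _ ≤ totalMS T := List.le_sum_of_mem (List.mem_map_of_mem (getD_mem [] hi))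

def occsInRow (T : SVTRep) (e : ℕ × Bool) (i : ℕ) : List ((ℕ × ℕ) × ℕ) :=
  (List.range (T.getD i []).length).filterMap fun k =>
    let m := (boxAt T i k).count e
    if m = 0 then none else some ((i, k), m)

def occs (T : SVTRep) (e : ℕ × Bool) : List ((ℕ × ℕ) × ℕ) :=
  (List.range T.length).flatMap (occsInRow T e)

lemma mem_occsInRow {T : SVTRep} {e : ℕ × Bool} {i : ℕ} {o : (ℕ × ℕ) × ℕ} :
    o ∈ occsInRow T e i ↔ o.1.1 = i ∧ o.1.2 < (T.getD i []).length ∧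
      e ∈ boxAt T i o.1.2 ∧ o.2 = (boxAt T i o.1.2).count e := by
  obtain ⟨⟨i', k⟩, m⟩ := o
  simp only [occsInRow, List.mem_filterMap, List.mem_range, Option.ite_none_left_eq_some,
    Option.some.injEq, Prod.mk.injEq, ← Multiset.count_ne_zero]
  constructor
  · rintro ⟨k, hk, hm, ⟨rfl, rfl⟩, rfl⟩
    exact ⟨rfl, hk, hm, rfl⟩
  · rintro ⟨rfl, hk, hm, rfl⟩
    exact ⟨k, hk, hm, ⟨rfl, rfl⟩, rfl⟩

lemma mem_occs {T : SVTRep} {e : ℕ × Bool} {o : (ℕ × ℕ) × ℕ} :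
    o ∈ occs T e ↔ IsBox T o.1 ∧ e ∈ boxAt T o.1.1 o.1.2 ∧ o.2 = (boxAt T o.1.1 o.1.2).count e := by
  simp only [occs, List.mem_flatMap, List.mem_range, mem_occsInRow, isBox_iff]
  constructor
  · rintro ⟨i, hi, rfl, hk, hm⟩
    exact ⟨⟨hi, hk⟩, hm⟩
  · rintro ⟨⟨hi, hk⟩, hm⟩
    exact ⟨_, hi, rfl, hk, hm⟩

lemma sum_map_snd_occs (T : SVTRep) (e : ℕ × Bool) :
    ((occs T e).map Prod.snd).sum = (totalMS T).count e := by
  have hrow (i : ℕ) : ((occsInRow T e i).map Prod.snd).sum = (T.getD i []).sum.count e := by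
    rw [occsInRow, sum_map_snd_filterMap, count_list_sum]
    exact congrArg _ (map_getD_range _ 0 (Multiset.count e))
  rw [occs, List.map_flatMap, sum_flatMap]
  simp only [hrow]
  rw [map_getD_range T [] (fun r => r.sum.count e), totalMS, count_list_sum, List.map_map]
  rfl

def primedOccs (T : SVTRep) (v : ℕ) : List ((ℕ × ℕ) × ℕ × Bool) :=
  (occP T v).map fun o => (o.1, o.2, true)

def unprimedOccs (T : SVTRep) (v : ℕ) : List ((ℕ × ℕ) × ℕ × Bool) :=
  (occU T v).map fun o => (o.1, o.2, false)

lemma allOcc_eq (T : SVTRep) :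
    allOcc T = (List.range ((totalMS T).map Prod.fst).sum).flatMap
      fun v₀ => primedOccs T (v₀ + 1) ++ unprimedOccs T (v₀ + 1) := rfl

lemma occP_eq_occs (T : SVTRep) (v : ℕ) : occP T v = occs T (v, true) := rfl

lemma occU_perm_occs (T : SVTRep) (v : ℕ) : (occU T v).Perm (occs T (v, false)) :=
  List.mergeSort_perm _ _

lemma mem_primedOccs {T : SVTRep} {v : ℕ} {o : (ℕ × ℕ) × ℕ × Bool} (h : o ∈ primedOccs T v) :
    IsBox T o.1 ∧ (v, true) ∈ boxAt T o.1.1 o.1.2 ∧ o.2.2 = true := by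
  obtain ⟨o', ho', rfl⟩ := List.mem_map.1 h
  obtain ⟨hbox, hmem, -⟩ := mem_occs.1 ho'
  exact ⟨hbox, hmem, rfl⟩

lemma mem_unprimedOccs {T : SVTRep} {v : ℕ} {o : (ℕ × ℕ) × ℕ × Bool}
    (h : o ∈ unprimedOccs T v) : IsBox T o.1 ∧ (v, false) ∈ boxAt T o.1.1 o.1.2 ∧ o.2.2 = false := by
  obtain ⟨o', ho', rfl⟩ := List.mem_map.1 h
  obtain ⟨hbox, hmem, -⟩ := mem_occs.1 ((occU_perm_occs T v).subset ho')
  exact ⟨hbox, hmem, rfl⟩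

lemma mem_occBlock {T : SVTRep} {v : ℕ} {o : (ℕ × ℕ) × ℕ × Bool}
    (h : o ∈ primedOccs T v ++ unprimedOccs T v) :
    IsBox T o.1 ∧ (v, o.2.2) ∈ boxAt T o.1.1 o.1.2 := by
  rcases List.mem_append.1 h with h | h
  · obtain ⟨hbox, hmem, hpr⟩ := mem_primedOccs h
    exact ⟨hbox, hpr ▸ hmem⟩
  · obtain ⟨hbox, hmem, hpr⟩ := mem_unprimedOccs h
    exact ⟨hbox, hpr ▸ hmem⟩

lemma mem_allOcc {T : SVTRep} {o : (ℕ × ℕ) × ℕ × Bool} (h : o ∈ allOcc T) :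
    IsBox T o.1 ∧ ∃ v, (v, o.2.2) ∈ boxAt T o.1.1 o.1.2 := by
  rw [allOcc_eq, List.mem_flatMap] at h
  obtain ⟨v₀, -, h⟩ := h
  obtain ⟨hbox, hmem⟩ := mem_occBlock h
  exact ⟨hbox, _, hmem⟩

lemma exists_mem_allOcc {T : SVTRep} {p : ℕ × ℕ} (hp : IsBox T p) {e : ℕ × Bool}
    (he : e ∈ boxAt T p.1 p.2) (he₀ : 0 < e.1) : ∃ o ∈ allOcc T, o.1 = p ∧ o.2.1 ≠ 0 := by
  have hcount : (boxAt T p.1 p.2).count e ≠ 0 := Multiset.count_ne_zero.2 he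
  have hocc : (p, (boxAt T p.1 p.2).count e) ∈ occs T e := mem_occs.2 ⟨hp, he, rfl⟩
  have hle : e.1 ≤ ((totalMS T).map Prod.fst).sum :=
    Multiset.le_sum_of_mem (Multiset.mem_map_of_mem _ (Multiset.mem_of_le (boxAt_le_totalMS hp) he))
  obtain ⟨v, pr⟩ := e
  obtain ⟨w, rfl⟩ : ∃ w, v = w + 1 := Nat.exists_eq_add_one.2 he₀
  refine ⟨(p, _, pr), ?_, rfl, hcount⟩
  rw [allOcc_eq, List.mem_flatMap]
  refine ⟨w, List.mem_range.2 (by simp only at hle; omega), ?_⟩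
  cases pr
  · exact List.mem_append_right _ (List.mem_map.2 ⟨_, (occU_perm_occs T _).symm.subset hocc, rfl⟩)
  · exact List.mem_append_left _ (List.mem_map.2 ⟨_, hocc, rfl⟩)

lemma totalMult_primedOccs (T : SVTRep) (v : ℕ) :
    totalMult (primedOccs T v) = (totalMS T).count (v, true) := by
  rw [← sum_map_snd_occs, ← occP_eq_occs, totalMult, primedOccs, List.map_map]
  rfl

lemma totalMult_unprimedOccs (T : SVTRep) (v : ℕ) :
    totalMult (unprimedOccs T v) = (totalMS T).count (v, false) := by
  rw [← sum_map_snd_occs, ← ((occU_perm_occs T v).map _).sum_eq, totalMult, unprimedOccs,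
    List.map_map]
  rfl

lemma totalMult_allOcc {T : SVTRep} (hpos : ∀ e ∈ totalMS T, 0 < e.1) :
    totalMult (allOcc T) = Multiset.card (totalMS T) := by
  set N := ((totalMS T).map Prod.fst).sum
  have hle : ∀ e ∈ totalMS T, e ∈ Finset.range (N + 1) ×ˢ (Finset.univ : Finset Bool) := by
    intro e he
    have := Multiset.le_sum_of_mem (Multiset.mem_map_of_mem Prod.fst he)
    simp only [Finset.mem_product, Finset.mem_range, Finset.mem_univ, and_true]
    omega
  have hzero : ∀ b, (totalMS T).count (0, b) = 0 := fun b =>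
    Multiset.count_eq_zero.2 fun h => (hpos _ h).ne rfl
  rw [← Multiset.sum_count_eq_card hle, Finset.sum_product, Finset.sum_range_succ']
  simp only [hzero, Fintype.sum_bool, add_zero]
  rw [allOcc_eq, totalMult_flatMap, ← List.toFinset_range, List.sum_toFinset _ List.nodup_range]
  simp only [totalMult_append, totalMult_primedOccs, totalMult_unprimedOccs]
  rfl

lemma keyOf_lt_keyOf {x y : ℕ × Bool} (h : x.1 < y.1) : keyOf x < keyOf y := by
  obtain ⟨a, b⟩ := x
  obtain ⟨c, d⟩ := y
  cases b <;> cases d <;> simp [keyOf] at * <;> omega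

lemma keyOf_primed_lt {v : ℕ} (hv : 0 < v) : keyOf (v, true) < keyOf (v, false) := by
  simp [keyOf]
  omega

lemma precedes_primedOccs (T : SVTRep) (v : ℕ) {p q : ℕ × ℕ} (h : p.1 < q.1) :
    Precedes p q (primedOccs T v) := by
  have hrow : ∀ j, ∀ o ∈ (occsInRow T (v, true) j).map fun o => (o.1, o.2, true), o.1.1 = j := by
    intro j o ho
    obtain ⟨o', ho', rfl⟩ := List.mem_map.1 ho
    exact (mem_occsInRow.1 ho').1
  rw [primedOccs, occP_eq_occs, occs, List.map_flatMap]
  refine precedes_flatMap_range _ _ p.1 (fun j hj o ho hq => ?_) (fun j hj o ho hp => ?_)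
    (precedes_of_forall_ne fun o ho hq => ?_)
  all_goals have := hrow _ o ho; grind

lemma precedes_unprimedOccs (T : SVTRep) (v : ℕ) {p q : ℕ × ℕ} (h : p.1 + p.2 < q.1 + q.2) :
    Precedes p q (unprimedOccs T v) := by
  have hsorted : (occU T v).Pairwise fun a b => a.1.1 + a.1.2 ≤ b.1.1 + b.1.2 :=
    (List.pairwise_mergeSort (fun a b c hab hbc => by simp only [decide_eq_true_eq] at *; omega)
      (fun a b => by simp only [Bool.or_eq_true, decide_eq_true_eq]; omega) _).imp
      (by simp only [decide_eq_true_eq]; exact id)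
  refine precedes_of_pairwise (R := fun o₁ o₂ => o₁.1.1 + o₁.1.2 ≤ o₂.1.1 + o₂.1.2)
    (fun hpq => by subst hpq; omega) (List.pairwise_map.2 hsorted) ?_
  rintro o₁ o₂ rfl rfl h'
  omega

/-- Only the block of the letter `e.1` can contain occurrences in both boxes. -/
lemma precedes_allOcc {T : SVTRep} {p q : ℕ × ℕ} {e : ℕ × Bool} (he₀ : 0 < e.1)
    (hmax : ∀ x ∈ boxAt T p.1 p.2, keyOf x ≤ keyOf e)
    (hle : ∀ y ∈ boxAt T q.1 q.2, keyOf e ≤ keyOf y)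
    (htie : Precedes p q (if e.2 then primedOccs T e.1 else unprimedOccs T e.1)) :
    Precedes p q (allOcc T) := by
  obtain ⟨v, pr⟩ := e
  obtain ⟨t, rfl⟩ : ∃ t, v = t + 1 := Nat.exists_eq_add_one.2 he₀
  rw [allOcc_eq]
  refine precedes_flatMap_range _ _ t (fun j hj o ho hq => ?_) (fun j hj o ho hp => ?_) ?_
  · have hmem := (mem_occBlock ho).2
    rw [hq] at hmem
    exact (hle _ hmem).not_gt (keyOf_lt_keyOf (by simp only; omega))
  · have hmem := (mem_occBlock ho).2
    rw [hp] at hmem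
    exact (hmax _ hmem).not_gt (keyOf_lt_keyOf (by simp only; omega))
  · cases pr
    · refine Precedes.append_left (fun o ho hq => ?_) htie
      have hmem := (mem_primedOccs ho).2.1
      rw [hq] at hmem
      exact (hle _ hmem).not_gt (keyOf_primed_lt t.succ_pos)
    · refine Precedes.append_right htie (fun o ho hp => ?_)
      have hmem := (mem_unprimedOccs ho).2.1
      rw [hp] at hmem
      exact (hmax _ hmem).not_gt (keyOf_primed_lt t.succ_pos)

end Occurrences

section Filling

lemma sshape_addLabels (S : SVTRep) (p : ℕ × ℕ) (s m : ℕ) (pr : Bool) :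
    sshape (addLabels S p s m pr) = sshape S := by
  refine List.ext_getElem (by simp [sshape, addLabels]) fun n _ hn => ?_
  simp only [sshape, addLabels, List.getElem_map, List.getElem_set]
  split_ifs with h
  · subst h
    simp [List.getElem?_eq_getElem (by simpa [sshape] using hn : p.1 < S.length)]
  · rfl

lemma boxAt_addLabels {S : SVTRep} {p : ℕ × ℕ} (hp : IsBox S p) (s m : ℕ) (pr : Bool) (i k : ℕ) :
    boxAt (addLabels S p s m pr) i k = (if p = (i, k) then labelRun s m pr else 0) + boxAt S i k := by
  obtain ⟨hi, hk⟩ := isBox_iff.1 hp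
  obtain ⟨a, b⟩ := p
  simp only [boxAt, addLabels, List.getD_eq_getElem?_getD, List.getElem?_set] at *
  by_cases h₁ : a = i <;> by_cases h₂ : b = k <;> simp_all [labelRun]

lemma totalMS_addLabels {S : SVTRep} {p : ℕ × ℕ} (hp : IsBox S p) (s m : ℕ) (pr : Bool) :
    totalMS (addLabels S p s m pr) = labelRun s m pr + totalMS S := by
  obtain ⟨hi, hk⟩ := isBox_iff.1 hp
  have hrow : (S.map List.sum).getD p.1 0 = (S.getD p.1 []).sum := by
    rw [List.getD_eq_getElem _ _ (by simpa using hi), List.getD_eq_getElem _ _ hi, List.getElem_map]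
  rw [totalMS, addLabels, List.map_set, ← labelRun, sum_set_add_getD hk, ← hrow,
    sum_set_add_getD (by simpa using hi), totalMS]

def labelAll (L : List ((ℕ × ℕ) × ℕ × Bool)) (Sn : SVTRep × ℕ) : SVTRep × ℕ :=
  L.foldl (fun Sn o => (addLabels Sn.1 o.1 Sn.2 o.2.1 o.2.2, Sn.2 + o.2.1)) Sn

lemma sshape_labelAll (L : List ((ℕ × ℕ) × ℕ × Bool)) (S : SVTRep) (n : ℕ) :
    sshape (labelAll L (S, n)).1 = sshape S := by
  induction L generalizing S n with
  | nil => rfl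
  | cons o L ih => rw [labelAll, List.foldl_cons, ← labelAll, ih, sshape_addLabels]

lemma boxAt_labelAll {L : List ((ℕ × ℕ) × ℕ × Bool)} {S : SVTRep} (hL : ∀ o ∈ L, IsBox S o.1)
    (n i k : ℕ) : boxAt (labelAll L (S, n)).1 i k = boxAt S i k + labelsAt L n (i, k) := by
  induction L generalizing S n with
  | nil => simp [labelAll, labelsAt]
  | cons o L ih =>
    have ho := hL o List.mem_cons_self
    rw [labelAll, List.foldl_cons, ← labelAll, ih, boxAt_addLabels ho, labelsAt]
    · abel
    · exact fun o' ho' => isBox_of_sshape_eq (sshape_addLabels ..) (hL o' (List.mem_cons_of_mem _ ho'))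

lemma totalMS_labelAll {L : List ((ℕ × ℕ) × ℕ × Bool)} {S : SVTRep} (hL : ∀ o ∈ L, IsBox S o.1)
    (n : ℕ) : totalMS (labelAll L (S, n)).1 = totalMS S + allLabels L n := by
  induction L generalizing S n with
  | nil => simp [labelAll, allLabels]
  | cons o L ih =>
    have ho := hL o List.mem_cons_self
    rw [labelAll, List.foldl_cons, ← labelAll, ih, totalMS_addLabels ho, allLabels]
    · abel
    · exact fun o' ho' => isBox_of_sshape_eq (sshape_addLabels ..) (hL o' (List.mem_cons_of_mem _ ho'))

def emptied (T : SVTRep) : SVTRep := T.map fun r => r.map fun _ => 0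

lemma stdize_eq_labelAll (T : SVTRep) : stdize T = (labelAll (allOcc T) (emptied T, 0)).1 := rfl

lemma sshape_emptied (T : SVTRep) : sshape (emptied T) = sshape T := by
  simp [sshape, emptied, Function.comp_def]

lemma boxAt_emptied (T : SVTRep) (i k : ℕ) : boxAt (emptied T) i k = 0 := by
  simp only [boxAt, emptied, List.getD_eq_getElem?_getD, List.getElem?_map]
  cases T[i]? <;> simp [List.getElem?_replicate]
  split_ifs <;> rfl

lemma totalMS_emptied (T : SVTRep) : totalMS (emptied T) = 0 := by
  simp [totalMS, emptied, Function.comp_def]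

lemma isBox_emptied_of_mem_allOcc {T : SVTRep} {o : (ℕ × ℕ) × ℕ × Bool} (ho : o ∈ allOcc T) :
    IsBox (emptied T) o.1 :=
  isBox_of_sshape_eq (sshape_emptied T) (mem_allOcc ho).1

lemma sshape_stdize (T : SVTRep) : sshape (stdize T) = sshape T := by
  rw [stdize_eq_labelAll, sshape_labelAll, sshape_emptied]

lemma boxAt_stdize (T : SVTRep) (i k : ℕ) :
    boxAt (stdize T) i k = labelsAt (allOcc T) 0 (i, k) := by
  rw [stdize_eq_labelAll, boxAt_labelAll (fun _ => isBox_emptied_of_mem_allOcc), boxAt_emptied,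
    zero_add]

lemma totalMS_stdize (T : SVTRep) : totalMS (stdize T) = allLabels (allOcc T) 0 := by
  rw [stdize_eq_labelAll, totalMS_labelAll (fun _ => isBox_emptied_of_mem_allOcc),
    totalMS_emptied, zero_add]

lemma isBox_of_mem_boxAt_stdize {T : SVTRep} {i k : ℕ} {e : ℕ × Bool}
    (he : e ∈ boxAt (stdize T) i k) : IsBox T (i, k) := by
  rw [boxAt_stdize] at he
  obtain ⟨o, ho, hop, -⟩ := exists_of_mem_labelsAt he
  exact hop ▸ (mem_allOcc ho).1

lemma map_fst_totalMS_stdize {T : SVTRep} (hpos : ∀ e ∈ totalMS T, 0 < e.1) :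
    (totalMS (stdize T)).map Prod.fst = (Finset.Icc 1 (Multiset.card (totalMS T))).val := by
  rw [totalMS_stdize, map_fst_allLabels, totalMult_allOcc hpos, ← map_add_one_range]
  simp_rw [zero_add]

lemma nodup_of_mem_stdize {T : SVTRep} {r : List (Multiset (ℕ × Bool))} (hr : r ∈ stdize T)
    {b : Multiset (ℕ × Bool)} (hb : b ∈ r) : b.Nodup := by
  obtain ⟨p, -, rfl⟩ := exists_isBox_of_mem hr hb
  rw [boxAt_stdize]
  exact nodup_labelsAt ..

end Filling

section WeakSetValued

lemma boxAt_ne_zero {T : SVTRep} (hne : ∀ r ∈ T, ∀ b ∈ r, b ≠ 0) {p : ℕ × ℕ} (hp : IsBox T p) :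
    boxAt T p.1 p.2 ≠ 0 := by
  obtain ⟨hi, hk⟩ := isBox_iff.1 hp
  exact hne _ (getD_mem [] hi) _ (getD_mem 0 hk)

lemma exists_maxKey_of_isWSVT {T : SVTRep} (hT : IsWSVT T) {p : ℕ × ℕ} (hp : IsBox T p) :
    ∃ e ∈ boxAt T p.1 p.2, 0 < e.1 ∧ ∀ x ∈ boxAt T p.1 p.2, keyOf x ≤ keyOf e := by
  obtain ⟨-, -, hne, hpos, -⟩ := hT
  obtain ⟨e, he, hmax⟩ := Multiset.exists_max_image keyOf (boxAt_ne_zero hne hp)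
  exact ⟨e, he, hpos e (Multiset.mem_of_le (boxAt_le_totalMS hp) he), hmax⟩

lemma isBox_above {T : SVTRep} (hshape : List.IsChain (fun r s => s.length < r.length) T)
    {i k : ℕ} (hp : IsBox T (i + 1, k)) : IsBox T (i, k + 1) := by
  obtain ⟨hi, hk⟩ : i + 1 < T.length ∧ k < (T.getD (i + 1) []).length := isBox_iff.1 hp
  have hlt := hshape.getElem i hi
  rw [List.getD_eq_getElem _ _ hi] at hk
  exact isBox_iff.2 ⟨by omega, by simp only; rw [List.getD_eq_getElem _ _ (by omega)]; omega⟩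

lemma precedes_allOcc_right {T : SVTRep} (hT : IsWSVT T) {i k : ℕ}
    (hp : IsBox T (i, k + 1)) : Precedes (i, k) (i, k + 1) (allOcc T) := by
  obtain ⟨⟨v, pr⟩, he, he₀, hmax⟩ :=
    exists_maxKey_of_isWSVT hT (p := (i, k)) (Nat.lt_of_succ_lt hp)
  obtain ⟨-, -, -, -, hrow, -, -, -, hprimed⟩ := hT
  refine precedes_allOcc he₀ hmax (hrow i k _ he) ?_
  cases pr
  · exact precedes_unprimedOccs T v (by simp)
  · refine precedes_of_forall_ne fun o ho hq => ?_
    have hmem := (mem_primedOccs ho).2.1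
    rw [hq] at hmem
    have := hprimed v i he hmem
    omega

lemma precedes_allOcc_down {T : SVTRep} (hT : IsWSVT T) {i k : ℕ}
    (hp : IsBox T (i + 1, k)) : Precedes (i, k + 1) (i + 1, k) (allOcc T) := by
  obtain ⟨⟨v, pr⟩, he, he₀, hmax⟩ := exists_maxKey_of_isWSVT hT (isBox_above hT.2.1 hp)
  obtain ⟨-, -, -, -, -, hcol, -, hunprimed, -⟩ := hT
  refine precedes_allOcc he₀ hmax (hcol i k _ he) ?_
  cases pr
  · refine precedes_of_forall_ne fun o ho hq => ?_
    have hmem := (mem_unprimedOccs ho).2.1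
    rw [hq] at hmem
    have := hunprimed v (i + k + 1) (x := i) (y := i + 1)
      ⟨by omega, by simpa [show i + k + 1 - i = k + 1 by omega] using he⟩
      ⟨by omega, by simpa [show i + k + 1 - (i + 1) = k by omega] using hmem⟩
    omega
  · exact precedes_primedOccs T v (by simp)

lemma Precedes.keyOf_le_stdize {T : SVTRep} {p q : ℕ × ℕ} (h : Precedes p q (allOcc T))
    {x y : ℕ × Bool} (hx : x ∈ boxAt (stdize T) p.1 p.2) (hy : y ∈ boxAt (stdize T) q.1 q.2) :
    keyOf x ≤ keyOf y := by
  rw [boxAt_stdize] at hx hy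
  exact (keyOf_lt_keyOf (h.lt_of_mem_labelsAt hx hy)).le

lemma boxAt_stdize_ne_zero {T : SVTRep} (hT : IsWSVT T) {p : ℕ × ℕ} (hp : IsBox T p) :
    boxAt (stdize T) p.1 p.2 ≠ 0 := by
  obtain ⟨-, -, hne, hpos, -⟩ := hT
  obtain ⟨e, he⟩ := Multiset.exists_mem_of_ne_zero (boxAt_ne_zero hne hp)
  obtain ⟨o, ho, rfl, hm⟩ :=
    exists_mem_allOcc hp he (hpos e (Multiset.mem_of_le (boxAt_le_totalMS hp) he))
  rw [boxAt_stdize]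
  exact labelsAt_ne_zero ho hm 0

lemma isWSVT_stdize {T : SVTRep} (hT : IsWSVT T) : IsWSVT (stdize T) := by
  have hshape := sshape_stdize T
  have ⟨hrows, hchain, _, hpos, _, _, hdiag, _, _⟩ := hT
  refine ⟨fun r hr => ?_, ?_, fun r hr b hb => ?_, fun e he => ?_, fun i k x hx y hy => ?_,
    fun i k x hx y hy => ?_, fun i e he => ?_, fun v c i ⟨_, hi⟩ j ⟨_, hj⟩ => ?_,
    fun v i k (hk : _ ∈ boxAt _ i k) l (hl : _ ∈ boxAt _ i l) => ?_⟩
  · obtain ⟨r', hr', hlen⟩ := List.mem_map.1 (hshape ▸ List.mem_map_of_mem hr : r.length ∈ sshape T)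
    exact List.ne_nil_of_length_pos (hlen ▸ List.length_pos_of_ne_nil (hrows r' hr'))
  · have hlengths : List.IsChain (fun a b => b < a) (sshape T) := (List.isChain_map _).2 hchain
    rw [← hshape] at hlengths
    exact (List.isChain_map _).1 hlengths
  · obtain ⟨p, hp, rfl⟩ := exists_isBox_of_mem hr hb
    exact boxAt_stdize_ne_zero hT (isBox_of_sshape_eq hshape.symm hp)
  · have := Multiset.mem_map_of_mem Prod.fst he
    rw [map_fst_totalMS_stdize hpos, Finset.mem_val, Finset.mem_Icc] at this
    exact this.1
  · exact (precedes_allOcc_right hT (isBox_of_mem_boxAt_stdize hy)).keyOf_le_stdize hx hy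
  · exact (precedes_allOcc_down hT (isBox_of_mem_boxAt_stdize hy)).keyOf_le_stdize hx hy
  · rw [boxAt_stdize] at he
    obtain ⟨o, ho, hop, hpr⟩ := exists_of_mem_labelsAt he
    obtain ⟨-, v, hv⟩ := mem_allOcc ho
    rw [hop] at hv
    exact hpr ▸ hdiag i (v, o.2.2) hv
  · rw [boxAt_stdize] at hi hj
    exact congrArg Prod.fst (eq_of_mem_labelsAt hi hj)
  · rw [boxAt_stdize] at hk hl
    exact congrArg Prod.snd (eq_of_mem_labelsAt hk hl)

end WeakSetValued

end Standardization

/-- the standardization of a weak set-valued shifted tableau is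
a standard set-valued shifted tableau (of the same shape, on as many letters
as `T` has entries). -/
theorem stmt13 (T : SVTRep) (hT : IsWSVT T) :
    IsStdSVT (Multiset.card (totalMS T)) (stdize T) ∧
    sshape (stdize T) = sshape T :=
  ⟨⟨⟨Standardization.isWSVT_stdize hT, fun _ hr _ hb => Standardization.nodup_of_mem_stdize hr hb⟩,
    Standardization.map_fst_totalMS_stdize hT.2.2.2.1⟩, Standardization.sshape_stdize T⟩
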